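/- arXiv:1309.0592 — 5 statements merged into one kernel-verified Lean document; each statement's English description precedes it below -/
import Mathlib

section
/- Let k be a field of characteristic p > 0, n ≥ 1, and for 1 ≤ i ≤ n let f_i = t_1^{k_{i1}} ⋯ t_n^{k_{in}} be monomials in k[t_1,…,t_n] with 0 ≤ k_{ij} ≤ p−1. Then the coefficient of the monomial t_1^{p−1} ⋯ t_n^{p−1} in the determinant of the Jacobian matrix (∂f_i/∂t_j) is zero. -/
open MvPolynomial Finset

lemma prod_monomial_aux {σ R ι : Type*} [CommSemiring R] (s : Finset ι)
    (e : ι → (σ →₀ ℕ)) (c : ι → R) :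
    ∏ i ∈ s, MvPolynomial.monomial (e i) (c i)
      = MvPolynomial.monomial (∑ i ∈ s, e i) (∏ i ∈ s, c i) := by
  induction s using Finset.cons_induction with
  | empty => simp [MvPolynomial.monomial_zero', MvPolynomial.C_1]
  | cons a s ha ih => simp [ih, MvPolynomial.monomial_mul]

/-- Let `k` be a field of characteristic `p > 0`, `n ≥ 1`, and for `1 ≤ i ≤ n` let
`f i = t₁^{k i 1} ⋯ tₙ^{k i n}` be monomials with exponents `0 ≤ k i j ≤ p - 1`.
Then the coefficient of `t₁^{p-1} ⋯ tₙ^{p-1}` in `det (∂ f i / ∂ t j)` is zero. -/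
theorem stmt2 (k : Type*) [Field k] (p : ℕ) (hp : p.Prime) [CharP k p]
    (n : ℕ) (hn : 1 ≤ n) (K : Fin n → Fin n → ℕ)
    (hbound : ∀ i j, K i j ≤ p - 1) :
    MvPolynomial.coeff (Finsupp.equivFunOnFinite.symm fun _ : Fin n => p - 1)
      (Matrix.det (Matrix.of fun i j : Fin n =>
        MvPolynomial.pderiv j (∏ l, (MvPolynomial.X l : MvPolynomial (Fin n) k) ^ K i l)))
      = 0 := by
  have := hp.one_lt
  set S : Fin n → (Fin n →₀ ℕ) := fun i => Finsupp.equivFunOnFinite.symm (K i) with hS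
  set T : Fin n →₀ ℕ := Finsupp.equivFunOnFinite.symm (fun _ : Fin n => p - 1) with hT
  have hSapp : ∀ i j, S i j = K i j := fun i j => rfl
  have hTapp : ∀ j, T j = p - 1 := fun j => rfl
  -- rewrite each product of X powers as a monomial
  have hmono : ∀ i, (∏ l, (MvPolynomial.X l : MvPolynomial (Fin n) k) ^ K i l)
      = MvPolynomial.monomial (S i) 1 := by
    intro i
    rw [← MvPolynomial.prod_X_pow_eq_monomial]
    refine (Finset.prod_subset (Finset.subset_univ _) fun l _ hl => ?_).symm
    simp only [Finsupp.mem_support_iff, not_not] at hl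
    rw [hSapp] at hl
    simp [hl]
  -- the entries:
  have hentry : ∀ i j : Fin n,
      MvPolynomial.pderiv j (∏ l, (MvPolynomial.X l : MvPolynomial (Fin n) k) ^ K i l)
        = MvPolynomial.monomial (S i - Finsupp.single j 1) ((K i j : k)) := by
    intro i j
    rw [hmono, MvPolynomial.pderiv_monomial, one_mul, hSapp]
  -- compute the exponent of each permutation term, given nonvanishing
  have hexp : ∀ (σ : Equiv.Perm (Fin n)), (∀ i, 1 ≤ K (σ i) i) →
      ∀ j, ∑ i, (S (σ i) - Finsupp.single i 1 : Fin n →₀ ℕ) j = (∑ i, K i j) - 1 := by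
    intro σ hσ j
    have : ∀ i : Fin n, (S (σ i) - Finsupp.single i 1 : Fin n →₀ ℕ) j
        = K (σ i) j - (if i = j then 1 else 0) := by
      intro i
      rw [Finsupp.tsub_apply, hSapp, Finsupp.single_apply]
    simp only [this]
    rw [← Finset.add_sum_erase _ _ (Finset.mem_univ j)]
    have h2 : ∑ i ∈ Finset.univ.erase j, (K (σ i) j - if i = j then 1 else 0)
        = ∑ i ∈ Finset.univ.erase j, K (σ i) j := by
      refine Finset.sum_congr rfl fun i hi => ?_
      rw [if_neg (Finset.mem_erase.mp hi).1, Nat.sub_zero]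
    rw [h2, if_pos rfl]
    have h3 := hσ j
    have h4 : (∑ i, K (σ i) j) = ∑ i, K i j := Equiv.sum_comp σ (fun i => K i j)
    rw [← h4, ← Finset.add_sum_erase _ (fun i => K (σ i) j) (Finset.mem_univ j)]
    omega
  rw [Matrix.det_apply]
  rw [MvPolynomial.coeff_sum]
  have hterm : ∀ σ : Equiv.Perm (Fin n),
      MvPolynomial.coeff T (Equiv.Perm.sign σ •
        ∏ i, (Matrix.of fun i j : Fin n =>
          MvPolynomial.pderiv j (∏ l, (MvPolynomial.X l : MvPolynomial (Fin n) k) ^ K i l)) (σ i) i)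
      = Equiv.Perm.sign σ • (if (∑ i, (S (σ i) - Finsupp.single i 1)) = T
          then (∏ i, (K (σ i) i : k)) else 0) := by
    intro σ
    simp only [Matrix.of_apply, hentry, prod_monomial_aux]
    rw [MvPolynomial.coeff_smul, MvPolynomial.coeff_monomial]
  rw [Finset.sum_congr rfl fun σ _ => hterm σ]
  by_cases hB : ∀ j, (∑ i, K i j) = p
  · -- coefficient equals det of the matrix of exponents mod p, which vanishes
    have hcond : ∀ σ : Equiv.Perm (Fin n),
        (if (∑ i, (S (σ i) - Finsupp.single i 1)) = T
          then (∏ i, (K (σ i) i : k)) else 0) = ∏ i, ((K (σ i) i : k)) := by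
      intro σ
      by_cases hσ : ∀ i, 1 ≤ K (σ i) i
      · rw [if_pos]
        ext j
        rw [Finsupp.finset_sum_apply, hexp σ hσ j, hTapp, hB j]
      · push_neg at hσ
        obtain ⟨i0, hi0⟩ := hσ
        have : K (σ i0) i0 = 0 := by omega
        have hz : (∏ i, ((K (σ i) i : k))) = 0 :=
          Finset.prod_eq_zero (Finset.mem_univ i0) (by rw [this]; exact Nat.cast_zero)
        rw [hz, ite_self]
    rw [Finset.sum_congr rfl fun σ _ => by rw [hcond σ]]
    have hdet : (∑ σ : Equiv.Perm (Fin n), Equiv.Perm.sign σ • ∏ i, ((K (σ i) i : k)))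
        = Matrix.det (Matrix.of fun i j : Fin n => (K i j : k)) := by
      simp only [Matrix.det_apply, Matrix.of_apply]
    rw [hdet]
    rw [← Matrix.exists_vecMul_eq_zero_iff]
    refine ⟨fun _ => 1, ?_, ?_⟩
    · intro h
      have := congrFun h ⟨0, hn⟩
      simp at this
    · funext j
      simp only [Matrix.vecMul, dotProduct, Pi.zero_apply, one_mul, Matrix.of_apply]
      rw [← Nat.cast_sum, hB j, CharP.cast_eq_zero]
  · push_neg at hB
    obtain ⟨j0, hj0⟩ := hB
    refine Finset.sum_eq_zero fun σ _ => ?_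
    have hval : (if (∑ i, (S (σ i) - Finsupp.single i 1)) = T
        then (∏ i, (K (σ i) i : k)) else 0) = 0 := by
      by_cases hσ : ∀ i, 1 ≤ K (σ i) i
      · rw [if_neg]
        intro h
        have h1 := hexp σ hσ j0
        rw [← Finsupp.finset_sum_apply, h, hTapp] at h1
        have h2 : 1 ≤ ∑ i, K i j0 := by
          have h4 : (∑ i, K (σ i) j0) = ∑ i, K i j0 := Equiv.sum_comp σ (fun i => K i j0)
          have h5 : K (σ j0) j0 ≤ ∑ i, K (σ i) j0 :=
            Finset.single_le_sum (f := fun i => K (σ i) j0) (fun i _ => Nat.zero_le _)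
              (Finset.mem_univ j0)
          have := hσ j0
          omega
        omega
      · push_neg at hσ
        obtain ⟨i0, hi0⟩ := hσ
        have hz : K (σ i0) i0 = 0 := by omega
        have : (∏ i, ((K (σ i) i : k))) = 0 :=
          Finset.prod_eq_zero (Finset.mem_univ i0) (by rw [hz]; exact Nat.cast_zero)
        rw [this, ite_self]
    rw [hval, smul_zero]
end

section
/- Let k be a field of characteristic p > 0 and let f_1,…,f_n ∈ k[[t_1,…,t_n]] be arbitrary formal power series. Then the coefficient of t_1^{p−1} ⋯ t_n^{p−1} in det(∂f_i/∂t_j) is zero. -/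
/-- The formal partial derivative of a multivariate power series with respect to the
`j`-th variable, defined coefficientwise:
`coeff d (∂_j f) = (d j + 1) * coeff (d + single j 1) f`. -/
noncomputable def mvPowerSeriesPderiv {σ : Type*} {R : Type*} [CommSemiring R]
    (j : σ) (f : MvPowerSeries σ R) : MvPowerSeries σ R :=
  fun d => ((d j + 1 : ℕ) : R) * MvPowerSeries.coeff (d + Finsupp.single j 1) f

/-! Multiplying column `j` by `t_j` turns `∂_j` into the Euler operator `t_j ∂_j`, which scales
the coefficient of `t^e` by `e_j`. The coefficient of `t^{p-1}` in `det (∂_j f_i)` is therefore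
that of `t^p` in `det (t_j ∂_j f_i)`, and the latter expands as a sum over decompositions
`e_1 + ⋯ + e_n = (p, …, p)` of products of coefficients of the `f_i` times `det (e_i j)`.
The rows of each matrix `(e_i j)` sum to `(p, …, p) = 0` in `k`, so every such determinant
vanishes. -/

open MvPowerSeries Finsupp Finset

theorem Matrix.det_eq_zero_of_sum_rows_eq_zero {n A : Type*} [Fintype n] [DecidableEq n]
    [Nonempty n] [CommRing A] [IsDomain A] (M : Matrix n n A) (h : ∀ j, ∑ i, M i j = 0) :
    M.det = 0 := by
  refine Matrix.exists_vecMul_eq_zero_iff.mp ⟨1, one_ne_zero, funext fun j => ?_⟩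
  simpa [Matrix.vecMul, dotProduct] using h j

section

variable {σ R : Type*} [CommSemiring R]

theorem coeff_X_mul_mvPowerSeriesPderiv [DecidableEq σ] (j : σ) (f : MvPowerSeries σ R)
    (e : σ →₀ ℕ) : coeff e (X j * mvPowerSeriesPderiv j f) = (e j : R) * coeff e f := by
  rw [X_def, coeff_monomial_mul, one_mul]
  split_ifs with h
  · have hj : (e - single j 1 : σ →₀ ℕ) j + 1 = e j := by
      rw [tsub_apply, single_eq_same]; exact Nat.sub_add_cancel (single_le_iff.mp h)
    show ((_ + 1 : ℕ) : R) * _ = _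
    rw [hj, tsub_add_cancel_of_le h]
  · rw [Nat.eq_zero_of_not_pos fun hj => h (single_le_iff.mpr hj), Nat.cast_zero, zero_mul]

theorem coeff_prod_X_mul [Fintype σ] (e : σ →₀ ℕ) (φ : MvPowerSeries σ R) :
    coeff (e + ∑ j, single j 1) ((∏ j, X j) * φ) = coeff e φ := by
  simp_rw [X_def]
  rw [prod_monomial, coeff_monomial_mul, if_pos le_add_self, add_tsub_cancel_right,
    prod_const_one, one_mul]

end

theorem coeff_det_of_coeff_eq_mul {σ R ι : Type*} [CommRing R] [Fintype ι] [DecidableEq ι]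
    [DecidableEq σ]
    (D : ι → MvPowerSeries σ R → MvPowerSeries σ R) (c : (σ →₀ ℕ) → ι → R)
    (hD : ∀ j φ e, coeff e (D j φ) = c e j * coeff e φ) (f : ι → MvPowerSeries σ R)
    (e : σ →₀ ℕ) :
    coeff e (Matrix.of fun i j => D j (f i)).det = ∑ l ∈ finsuppAntidiag univ e,
      (∏ i, coeff (l i) (f i)) * (Matrix.of fun i j => c (l i) j).det := by
  rw [← Matrix.det_transpose, Matrix.det_apply', map_sum]
  simp_rw [← Matrix.det_transpose (Matrix.of _), Matrix.det_apply', Finset.mul_sum]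
  rw [Finset.sum_comm]
  refine Finset.sum_congr rfl fun π _ => ?_
  rw [← zsmul_eq_mul, map_zsmul, coeff_prod, Finset.smul_sum]
  refine Finset.sum_congr rfl fun l _ => ?_
  simp only [Matrix.transpose_apply, Matrix.of_apply, hD, prod_mul_distrib, zsmul_eq_mul]
  ring

/-- Let `k` be a field of characteristic `p > 0` and `f₁, …, fₙ ∈ k[[t₁, …, tₙ]]`
arbitrary formal power series (`n ≥ 1`).  Then the coefficient of
`t₁^{p-1} ⋯ tₙ^{p-1}` in `det (∂ f i / ∂ t j)` is zero. -/
theorem stmt3 (k : Type*) [Field k] (p : ℕ) (hp : p.Prime) [CharP k p]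
    (n : ℕ) (hn : 1 ≤ n) (f : Fin n → MvPowerSeries (Fin n) k) :
    MvPowerSeries.coeff (Finsupp.equivFunOnFinite.symm fun _ : Fin n => p - 1)
      (Matrix.det (Matrix.of fun i j : Fin n => mvPowerSeriesPderiv j (f i))) = 0 := by
  have : Nonempty (Fin n) := ⟨⟨0, hn⟩⟩
  have hsum : ∀ j,
      ((equivFunOnFinite.symm fun _ => p - 1) + ∑ i, single i 1 : Fin n →₀ ℕ) j = p := fun j => by
    simp [single_apply, Nat.sub_add_cancel hp.one_le]
  rw [← coeff_prod_X_mul, ← Matrix.det_mul_row]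
  simp only [Matrix.of_apply]
  rw [coeff_det_of_coeff_eq_mul (fun j φ => X j * mvPowerSeriesPderiv j φ) (fun e j => (e j : k))
    coeff_X_mul_mvPowerSeriesPderiv]
  refine Finset.sum_eq_zero fun l hl => ?_
  rw [Matrix.det_eq_zero_of_sum_rows_eq_zero, mul_zero]
  intro j
  simp only [Matrix.of_apply]
  rw [← Nat.cast_sum, ← finsetSum_apply, (mem_finsuppAntidiag.mp hl).1, hsum,
    CharP.cast_eq_zero]
end

section
/- Let A be a commutative ring flat over ℤ/p²ℤ with p prime, and let F, F' : A → A be two ring endomorphisms that both reduce to the Frobenius endomorphism on A/pA. Then for all a ∈ A, F'(a) − F(a) ∈ pA, and the induced map η̄ : A/pA → A/pA (defined via F'(a) − F(a) = p·(lift of η̄(ā)), using the isomorphism (A/pA) ≅ pA given by multiplication by p) is additive and satisfies η̄(āb̄) = ā^p η̄(b̄) + b̄^p η̄(ā). -/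
open TensorProduct

private lemma zmod_key (p : ℕ) (hp : p.Prime) (u : ZMod (p ^ 2))
    (h : (p : ZMod (p ^ 2)) * u = 0) : ∃ v : ZMod (p ^ 2), u = (p : ZMod (p ^ 2)) * v := by
  haveI : NeZero (p ^ 2) := ⟨pow_ne_zero 2 hp.pos.ne'⟩
  have hu : ((u.val : ℕ) : ZMod (p ^ 2)) = u := ZMod.natCast_zmod_val u
  have h2 : ((p * u.val : ℕ) : ZMod (p ^ 2)) = 0 := by push_cast; rw [hu]; exact h
  rw [ZMod.natCast_eq_zero_iff] at h2
  have h2' : p * p ∣ p * u.val := by rw [← pow_two]; exact h2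
  have hdvd : p ∣ u.val := (mul_dvd_mul_iff_left (a := p) hp.pos.ne').mp h2'
  obtain ⟨w, hw⟩ := hdvd
  exact ⟨(w : ZMod (p ^ 2)), by rw [← hu, hw]; push_cast; ring⟩

private lemma flat_key (p : ℕ) (hp : p.Prime) (A : Type*) [CommRing A]
    [Algebra (ZMod (p ^ 2)) A] [Module.Flat (ZMod (p ^ 2)) A]
    (c : A) (hc : (p : A) * c = 0) : c ∈ Ideal.span {(p : A)} := by
  have hsmul : ∀ x : A, (p : ZMod (p ^ 2)) • x = (p : A) * x := by
    intro x
    rw [Algebra.smul_def, map_natCast]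
  have hexact : Function.Exact (LinearMap.lsmul (ZMod (p ^ 2)) (ZMod (p ^ 2)) (p : ZMod (p ^ 2)))
      (LinearMap.lsmul (ZMod (p ^ 2)) (ZMod (p ^ 2)) (p : ZMod (p ^ 2))) := by
    intro x
    simp only [LinearMap.lsmul_apply, smul_eq_mul, Set.mem_range]
    constructor
    · intro hx
      obtain ⟨v, hv⟩ := zmod_key p hp x hx
      exact ⟨v, hv.symm⟩
    · rintro ⟨y, rfl⟩
      rw [← mul_assoc, ← Nat.cast_mul, ← pow_two, ZMod.natCast_self, zero_mul]
  have hA := Module.Flat.rTensor_exact (M := A) hexact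
  have h0 : (LinearMap.rTensor A (LinearMap.lsmul (ZMod (p ^ 2)) (ZMod (p ^ 2)) (p : ZMod (p ^ 2))))
      ((1 : ZMod (p ^ 2)) ⊗ₜ[ZMod (p ^ 2)] c) = 0 := by
    rw [LinearMap.rTensor_tmul]
    simp only [LinearMap.lsmul_apply, smul_eq_mul, mul_one]
    have : (p : ZMod (p ^ 2)) ⊗ₜ[ZMod (p ^ 2)] c
        = (1 : ZMod (p ^ 2)) ⊗ₜ[ZMod (p ^ 2)] ((p : ZMod (p ^ 2)) • c) := by
      rw [← TensorProduct.smul_tmul, smul_eq_mul, mul_one]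
    rw [this, hsmul, hc, TensorProduct.tmul_zero]
  obtain ⟨v, hv⟩ := (hA _).mp h0
  have hgen : ∀ w : (ZMod (p ^ 2)) ⊗[ZMod (p ^ 2)] A,
      TensorProduct.lid (ZMod (p ^ 2)) A
        ((LinearMap.rTensor A (LinearMap.lsmul (ZMod (p ^ 2)) (ZMod (p ^ 2)) (p : ZMod (p ^ 2)))) w)
      = (p : ZMod (p ^ 2)) • TensorProduct.lid (ZMod (p ^ 2)) A w := by
    intro w
    induction w using TensorProduct.induction_on with
    | zero => simp
    | tmul r a =>
        simp only [LinearMap.rTensor_tmul, LinearMap.lsmul_apply, smul_eq_mul,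
          TensorProduct.lid_tmul, smul_smul]
    | add x y hx hy => simp [map_add, hx, hy, smul_add]
  have hc2 : c = (p : ZMod (p ^ 2)) • (TensorProduct.lid (ZMod (p ^ 2)) A v) := by
    have h3 := congrArg (TensorProduct.lid (ZMod (p ^ 2)) A) hv
    rw [hgen] at h3
    simpa using h3.symm
  rw [Ideal.mem_span_singleton]
  exact ⟨TensorProduct.lid (ZMod (p ^ 2)) A v, by rw [hc2, hsmul]⟩

/-- Let `A` be a commutative ring, flat over `ℤ/p²ℤ` (`p` prime), and let
`F, F' : A → A` be ring endomorphisms both reducing to the Frobenius on `A/pA`.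
Then `F' a - F a ∈ pA` for all `a`, and the induced map `η̄ : A/pA → A/pA`
(characterised by `F' a - F a = p * b` whenever `b` lifts `η̄ ā`, via the
isomorphism `A/pA ≅ pA` given by multiplication by `p`) is additive and satisfies
`η̄ (ā * b̄) = ā ^ p * η̄ b̄ + b̄ ^ p * η̄ ā`. -/
theorem stmt6 (p : ℕ) (hp : p.Prime) (A : Type*) [CommRing A]
    [Algebra (ZMod (p ^ 2)) A] [Module.Flat (ZMod (p ^ 2)) A]
    (F F' : A →+* A)
    (hF : ∀ a : A, Ideal.Quotient.mk (Ideal.span {(p : A)}) (F a) =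
      (Ideal.Quotient.mk (Ideal.span {(p : A)}) a) ^ p)
    (hF' : ∀ a : A, Ideal.Quotient.mk (Ideal.span {(p : A)}) (F' a) =
      (Ideal.Quotient.mk (Ideal.span {(p : A)}) a) ^ p) :
    (∀ a : A, F' a - F a ∈ Ideal.span {(p : A)}) ∧
    ∃ η : A ⧸ Ideal.span {(p : A)} → A ⧸ Ideal.span {(p : A)},
      (∀ x y, η (x + y) = η x + η y) ∧
      (∀ x y, η (x * y) = x ^ p * η y + y ^ p * η x) ∧
      (∀ a b : A, Ideal.Quotient.mk (Ideal.span {(p : A)}) b =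
          η (Ideal.Quotient.mk (Ideal.span {(p : A)}) a) →
        F' a - F a = (p : A) * b) := by
  set I : Ideal A := Ideal.span {(p : A)} with hI
  set q : A →+* A ⧸ I := Ideal.Quotient.mk I with hq
  -- p^2 = 0 in A
  have hp2 : (p : A) * (p : A) = 0 := by
    have : ((p ^ 2 : ℕ) : A) = algebraMap (ZMod (p ^ 2)) A ((p ^ 2 : ℕ) : ZMod (p ^ 2)) := by
      rw [map_natCast]
    rw [ZMod.natCast_self, map_zero] at this
    rw [← pow_two, ← Nat.cast_pow, this]
  -- the kernel lemma
  have hker : ∀ x y : A, (p : A) * x = (p : A) * y → q x = q y := by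
    intro x y hxy
    have : (p : A) * (x - y) = 0 := by rw [mul_sub, hxy, sub_self]
    have hmem := flat_key p hp A (x - y) this
    rwa [hq, Ideal.Quotient.mk_eq_mk_iff_sub_mem]
  -- membership
  have hmem : ∀ a : A, F' a - F a ∈ I := by
    intro a
    rw [← Ideal.Quotient.eq_zero_iff_mem (I := I)]
    show q _ = 0
    rw [map_sub, hF', hF, sub_self]
  -- choose lifts
  have hb : ∀ a : A, ∃ c : A, F' a - F a = (p : A) * c := by
    intro a
    obtain ⟨c, hc⟩ := Ideal.mem_span_singleton.mp (hI ▸ hmem a)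
    exact ⟨c, hc⟩
  choose b hbspec using hb
  -- well definedness
  have hwd : ∀ a a' : A, q a = q a' → q (b a) = q (b a') := by
    intro a a' haa
    rw [hq, Ideal.Quotient.mk_eq_mk_iff_sub_mem, hI, Ideal.mem_span_singleton] at haa
    obtain ⟨t, ht⟩ := haa
    have ha : a = a' + (p : A) * t := by linear_combination ht
    have hFt : F' (a' + (p : A) * t) - F (a' + (p : A) * t)
        = (p : A) * (b a' + (F' t - F t)) := by
      have e1 : F' ((p : A) * t) = (p : A) * F' t := by
        rw [map_mul, map_natCast]
      have e2 : F ((p : A) * t) = (p : A) * F t := by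
        rw [map_mul, map_natCast]
      rw [map_add, map_add, e1, e2]
      have := hbspec a'
      ring_nf
      linear_combination this
    have hpb : (p : A) * b a = (p : A) * (b a' + (F' t - F t)) := by
      rw [← hbspec a, ha, hFt]
    have h1 := hker _ _ hpb
    rw [map_add] at h1
    have h2 : q (F' t - F t) = 0 := by
      rw [hq]; exact (Ideal.Quotient.eq_zero_iff_mem).mpr (hmem t)
    rw [h2, add_zero] at h1
    exact h1
  -- section of q
  have hsec : ∀ x : A ⧸ I, ∃ a : A, q a = x := Ideal.Quotient.mk_surjective
  choose sec hsecspec using hsec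
  refine ⟨hmem, fun x => q (b (sec x)), ?_, ?_, ?_⟩
  · -- additivity
    intro x y
    show q (b (sec (x + y))) = q (b (sec x)) + q (b (sec y))
    have h1 : q (sec (x + y)) = q (sec x + sec y) := by
      rw [map_add, hsecspec, hsecspec, hsecspec]
    rw [hwd _ _ h1]
    have hadd : (p : A) * b (sec x + sec y) = (p : A) * (b (sec x) + b (sec y)) := by
      rw [← hbspec, map_add, map_add]
      have h2 := hbspec (sec x)
      have h3 := hbspec (sec y)
      linear_combination h2 + h3
    have := hker _ _ hadd
    rw [map_add] at this
    exact this
  · -- Leibniz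
    intro x y
    show q (b (sec (x * y))) = x ^ p * q (b (sec y)) + y ^ p * q (b (sec x))
    have h1 : q (sec (x * y)) = q (sec x * sec y) := by
      rw [map_mul, hsecspec, hsecspec, hsecspec]
    rw [hwd _ _ h1]
    have hmul : (p : A) * b (sec x * sec y)
        = (p : A) * (F' (sec x) * b (sec y) + F (sec y) * b (sec x)) := by
      rw [← hbspec, map_mul, map_mul]
      have h2 := hbspec (sec x)
      have h3 := hbspec (sec y)
      linear_combination F' (sec x) * h3 + F (sec y) * h2
    have h4 := hker _ _ hmul
    rw [map_add, map_mul, map_mul] at h4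
    rw [h4, hF', hF, hsecspec, hsecspec]
  · -- characterisation
    intro a b0 hb0
    have h1 : q b0 = q (b a) := by
      rw [hb0]; exact hwd _ _ (hsecspec (q a))
    rw [hq, Ideal.Quotient.mk_eq_mk_iff_sub_mem, hI, Ideal.mem_span_singleton] at h1
    obtain ⟨s, hs⟩ := h1
    have : b0 = b a + (p : A) * s := by linear_combination hs
    rw [this, mul_add, ← mul_assoc, hp2, zero_mul, add_zero, hbspec]
end

section
/- Let k be a field of characteristic p > 0 and let f ∈ k[x] be a polynomial. Define a self-map of the two affine charts of ℙ¹ over W₂(k), glued via xy = 1, by x ↦ x^p + p·f(x). This extends to an endomorphism of the second chart (i.e. y ↦ y^p·(1 + p·f(1/y)·y^p)^{-1} has polynomial entries) if and only if deg f ≤ 2p. -/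
open LaurentPolynomial

/-- Frobenius lifting on `ℙ¹` over `W₂(k)`:  let `R` model `W₂(k)`, with
`ι : k →+ R` the additive isomorphism of `k` onto `p·R ⊆ R` (so `ι` is injective,
takes values in `pR`, and `p · ι a = 0`).  The self-map `x ↦ x^p + p·f(x)` of the
first chart extends to the second chart glued by `x y = 1`, i.e. the Laurent
polynomial `y^p − p·y^{2p}·f(1/y) = y^p·(1 + p·f(1/y)·y^p)⁻¹` is a polynomial
in `y`, if and only if `deg f ≤ 2p`. -/
theorem stmt7 (p : ℕ) (hp : p.Prime) (k : Type*) [Field k] [CharP k p]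
    (R : Type*) [CommRing R] (ι : k →+ R)
    (hinj : Function.Injective ι)
    (hrange : ∀ a : k, ι a ∈ Ideal.span {(p : R)})
    (hkill : ∀ a : k, (p : R) * ι a = 0)
    (f : Polynomial k) :
    (∃ g : Polynomial R, Polynomial.toLaurent g =
        LaurentPolynomial.T (p : ℤ) -
          ∑ i ∈ Finset.range (f.natDegree + 1),
            LaurentPolynomial.C (ι (f.coeff i)) *
              LaurentPolynomial.T (2 * (p : ℤ) - (i : ℤ))) ↔
      f.natDegree ≤ 2 * p := by
  set d := f.natDegree with hd
  constructor
  · rintro ⟨g, hg⟩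
    by_contra hlt
    push_neg at hlt
    -- evaluate both sides at the negative exponent `2p - d`
    have hm : (2 * (p : ℤ) - (d : ℤ)) < 0 := by
      have : (2 * p : ℕ) < d := hlt
      push_cast
      omega
    have hfne : f ≠ 0 := by
      intro h
      rw [hd, h, Polynomial.natDegree_zero] at hlt
      omega
    have key := congrArg (fun q : LaurentPolynomial R =>
      q.coeff (2 * (p : ℤ) - (d : ℤ))) hg
    -- LHS is zero: support of a polynomial lives in ℕ
    have hL : (Polynomial.toLaurent g).coeff
        (2 * (p : ℤ) - (d : ℤ)) = 0 := by
      by_contra h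
      have hmem : (2 * (p : ℤ) - (d : ℤ)) ∈ (Polynomial.toLaurent g).coeff.support :=
        Finsupp.mem_support_iff.mpr h
      rw [LaurentPolynomial.support_coeff_toLaurent] at hmem
      obtain ⟨n, -, hn⟩ := Finset.mem_map.mp hmem
      have : ((n : ℤ)) = 2 * (p : ℤ) - (d : ℤ) := hn
      omega
    rw [hL] at key
    -- RHS computation
    have hT : (LaurentPolynomial.T (p : ℤ) : R[T;T⁻¹]).coeff
        (2 * (p : ℤ) - (d : ℤ)) = 0 := by
      rw [LaurentPolynomial.T, AddMonoidAlgebra.coeff_single, Finsupp.single_apply, if_neg]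
      omega
    have hsum : ((∑ i ∈ Finset.range (d + 1),
        LaurentPolynomial.C (ι (f.coeff i)) *
          LaurentPolynomial.T (2 * (p : ℤ) - (i : ℤ))) : R[T;T⁻¹]).coeff
        (2 * (p : ℤ) - (d : ℤ)) = ι (f.coeff d) := by
      rw [AddMonoidAlgebra.coeff_sum, Finsupp.finset_sum_apply]
      rw [Finset.sum_eq_single d]
      · rw [← LaurentPolynomial.single_eq_C_mul_T, AddMonoidAlgebra.coeff_single, Finsupp.single_apply, if_pos rfl]
      · intro i _ hi
        rw [← LaurentPolynomial.single_eq_C_mul_T, AddMonoidAlgebra.coeff_single, Finsupp.single_apply, if_neg]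
        intro h
        exact hi (by omega)
      · intro h
        exact absurd (Finset.self_mem_range_succ d) h
    rw [AddMonoidAlgebra.coeff_sub, Finsupp.sub_apply, hT, hsum, zero_sub] at key
    have : ι (f.coeff d) = 0 := by
      rw [eq_comm, neg_eq_zero] at key; exact key
    have hc0 : f.coeff d = 0 := hinj (by rw [this, map_zero])
    exact Polynomial.leadingCoeff_ne_zero.mpr hfne hc0
  · intro hle
    refine ⟨Polynomial.X ^ p - ∑ i ∈ Finset.range (d + 1),
      Polynomial.C (ι (f.coeff i)) * Polynomial.X ^ (2 * p - i), ?_⟩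
    rw [map_sub, map_sum, Polynomial.toLaurent_X_pow]
    congr 1
    refine Finset.sum_congr rfl fun i hi => ?_
    rw [Polynomial.toLaurent_C_mul_X_pow]
    congr 1
    have hi' : i ≤ 2 * p := le_trans (Nat.lt_succ_iff.mp (Finset.mem_range.mp hi)) hle
    push_cast [Nat.cast_sub hi']
    ring
end

section
/- Let R be a commutative ring with p·R of square zero (e.g. R flat over ℤ/p²ℤ), a, b, A, B ∈ R with A ≡ a^p and B ≡ b^p modulo pR, and a, A invertible. Then in R[y], the polynomial ((a y + b)^p − B)·A^{−1} equals y^p + δ where δ ∈ p·R[y] and every monomial of δ has degree ≤ p. -/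
open Polynomial

/-!
Modulo `p`, raising to the `p`-th power is additive, so `(a y + b)^p ≡ a^p y^p + b^p ≡ A y^p + B`
coefficientwise; hence `(a y + b)^p - B ≡ A y^p`, and multiplying by `A⁻¹` leaves `y^p` plus a
polynomial with coefficients in `pR`.
-/

theorem add_pow_prime_sub_mem {S : Type*} [CommRing S] {p : ℕ} (hp : p.Prime) {I : Ideal S}
    (hpI : (p : S) ∈ I) (x y : S) : (x + y) ^ p - (x ^ p + y ^ p) ∈ I := by
  obtain ⟨r, hr⟩ := exists_add_pow_prime_eq hp x y
  rw [hr, add_sub_cancel_left, mul_assoc, mul_assoc]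
  exact I.mul_mem_right _ hpI

theorem affine_pow_prime_sub_mem_map_C {R : Type*} [CommRing R] {p : ℕ} (hp : p.Prime)
    {I : Ideal R} (hpI : (p : R) ∈ I) (a b : R) :
    (C a * X + C b) ^ p - (C (a ^ p) * X ^ p + C (b ^ p)) ∈ I.map C := by
  have hpJ : (p : R[X]) ∈ I.map C := by
    simpa only [map_natCast] using Ideal.mem_map_of_mem C hpI
  have h := add_pow_prime_sub_mem hp hpJ (C a * X) (C b)
  rwa [mul_pow, ← C_pow, ← C_pow] at h

theorem stmt18_general (p : ℕ) (hp : p.Prime) (R : Type*) [CommRing R]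
    (a b A B : R)
    (hA : A - a ^ p ∈ Ideal.span {(p : R)}) (hB : B - b ^ p ∈ Ideal.span {(p : R)})
    (Ainv : R) (hAinv : A * Ainv = 1) :
    ∃ δ : Polynomial R,
      ((C a * X + C b) ^ p - C B) * C Ainv = X ^ p + δ ∧
      (∀ i, δ.coeff i ∈ Ideal.span {(p : R)}) ∧
      δ.natDegree ≤ p := by
  set I : Ideal R := Ideal.span {(p : R)}
  set δ := ((C a * X + C b) ^ p - C B) * C Ainv - X ^ p
  have hfrob := affine_pow_prime_sub_mem_map_C hp (Ideal.subset_span rfl : (p : R) ∈ I) a b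
  have hA' : C (A - a ^ p) ∈ I.map C := Ideal.mem_map_of_mem C hA
  have hB' : C (B - b ^ p) ∈ I.map C := Ideal.mem_map_of_mem C hB
  have hδ : δ = ((C a * X + C b) ^ p - (C (a ^ p) * X ^ p + C (b ^ p))) * C Ainv
      - C (A - a ^ p) * X ^ p * C Ainv - C (B - b ^ p) * C Ainv := by
    have hCAinv : C A * C Ainv = 1 := by rw [← C_mul, hAinv, C_1]
    simp only [δ, C_sub, C_pow]
    linear_combination (X ^ p : R[X]) * hCAinv
  have hδI : δ ∈ I.map C := by
    rw [hδ]
    exact sub_mem (sub_mem (Ideal.mul_mem_right _ _ hfrob)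
      (Ideal.mul_mem_right _ _ (Ideal.mul_mem_right _ _ hA'))) (Ideal.mul_mem_right _ _ hB')
  refine ⟨δ, by ring, Ideal.mem_map_C_iff.mp hδI, ?_⟩
  refine (natDegree_sub_le _ _).trans (max_le ?_ (natDegree_X_pow_le p))
  compute_degree

/-- Let `R` be a commutative ring in which `pR` has square zero and `p·(pR) = 0`
(e.g. `R` flat over `ℤ/p²ℤ`), let `a, b, A, B ∈ R` with `A ≡ a^p` and `B ≡ b^p`
modulo `pR`, and suppose `a` and `A` are invertible, with `Ainv` the inverse of
`A`.  Then in `R[y]` we have `((a·y + b)^p − B)·A⁻¹ = y^p + δ`, where all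
coefficients of `δ` lie in `pR` and every monomial of `δ` has degree `≤ p`. -/
theorem stmt18 (p : ℕ) (hp : p.Prime) (R : Type*) [CommRing R]
    (hsq : ∀ x y : R, x ∈ Ideal.span {(p : R)} → y ∈ Ideal.span {(p : R)} → x * y = 0)
    (hpp : ∀ x : R, x ∈ Ideal.span {(p : R)} → (p : R) * x = 0)
    (a b A B : R)
    (hA : A - a ^ p ∈ Ideal.span {(p : R)}) (hB : B - b ^ p ∈ Ideal.span {(p : R)})
    (ha : IsUnit a) (Ainv : R) (hAinv : A * Ainv = 1) :
    ∃ δ : Polynomial R,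
      ((C a * X + C b) ^ p - C B) * C Ainv = X ^ p + δ ∧
      (∀ i, δ.coeff i ∈ Ideal.span {(p : R)}) ∧
      δ.natDegree ≤ p :=
  stmt18_general p hp R a b A B hA hB Ainv hAinv
end
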